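/- arXiv:2010.10859 — 5 statements merged into one kernel-verified Lean document; each statement's English description precedes it below -/
import Mathlib

section
/- The coinductive type equality relation ≈ on recursive types is reflexive: for every (contractive, closed) type τ, τ ≈ τ. -/
set_option autoImplicit true

/-- Types of the recursive-type calculi (de Bruijn indices for type variables). -/
inductive Ty : Type
  | unit : Ty
  | bool : Ty
  | arrow : Ty → Ty → Ty
  | prod : Ty → Ty → Ty
  | sum : Ty → Ty → Ty
  | mu : Ty → Ty
  | tvar : ℕ → Ty
  deriving DecidableEq

namespace Ty

def shift : ℕ → Ty → Ty
  | _, unit => unit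
  | _, bool => bool
  | c, arrow a b => arrow (shift c a) (shift c b)
  | c, prod a b => prod (shift c a) (shift c b)
  | c, sum a b => sum (shift c a) (shift c b)
  | c, mu a => mu (shift (c+1) a)
  | c, tvar n => if n < c then tvar n else tvar (n+1)

def subst : ℕ → Ty → Ty → Ty
  | _, _, unit => unit
  | _, _, bool => bool
  | k, s, arrow a b => arrow (subst k s a) (subst k s b)
  | k, s, prod a b => prod (subst k s a) (subst k s b)
  | k, s, sum a b => sum (subst k s a) (subst k s b)
  | k, s, mu a => mu (subst (k+1) (shift 0 s) a)
  | k, s, tvar n => if n = k then s else if k < n then tvar (n-1) else tvar n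

/-- The unfolding  τ[μα.τ/α]  of the recursive type μα.τ with body τ. -/
def unfoldTy (body : Ty) : Ty := subst 0 (mu body) body

def FVBelow : ℕ → Ty → Prop
  | _, unit => True
  | _, bool => True
  | k, arrow a b => FVBelow k a ∧ FVBelow k b
  | k, prod a b => FVBelow k a ∧ FVBelow k b
  | k, sum a b => FVBelow k a ∧ FVBelow k b
  | k, mu a => FVBelow (k+1) a
  | k, tvar n => n < k

def Closed (τ : Ty) : Prop := FVBelow 0 τ

/-- `Guarded α τ`: the type variable `α` does not occur at the top level of `τ`
    (i.e. it is guarded by one of the constructors →, ×, ⊎). -/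
def Guarded : ℕ → Ty → Prop
  | α, mu a => Guarded (α+1) a
  | α, tvar n => n ≠ α
  | _, _ => True

def Contractive : Ty → Prop
  | arrow a b => Contractive a ∧ Contractive b
  | prod a b => Contractive a ∧ Contractive b
  | sum a b => Contractive a ∧ Contractive b
  | mu a => Guarded 0 a ∧ Contractive a
  | _ => True

/-- Leading-mu-count. -/
def lMuCount : Ty → ℕ
  | mu a => lMuCount a + 1
  | _ => 0

end Ty

/-- Repeatedly unfold leading μs (with explicit fuel). -/
def unfoldMus : ℕ → Ty → Ty
  | 0, τ => τ
  | k+1, Ty.mu a => unfoldMus k (Ty.unfoldTy a)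
  | _+1, τ => τ

/-- One-step functional for the coinductive type-equality relation. -/
def TyEqF (R : Ty → Ty → Prop) (a b : Ty) : Prop :=
  (a = Ty.unit ∧ b = Ty.unit) ∨ (a = Ty.bool ∧ b = Ty.bool) ∨
  (∃ n, a = Ty.tvar n ∧ b = Ty.tvar n) ∨
  (∃ a1 a2 b1 b2, a = Ty.arrow a1 a2 ∧ b = Ty.arrow b1 b2 ∧ R a1 b1 ∧ R a2 b2) ∨
  (∃ a1 a2 b1 b2, a = Ty.prod a1 a2 ∧ b = Ty.prod b1 b2 ∧ R a1 b1 ∧ R a2 b2) ∨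
  (∃ a1 a2 b1 b2, a = Ty.sum a1 a2 ∧ b = Ty.sum b1 b2 ∧ R a1 b1 ∧ R a2 b2) ∨
  (∃ a', a = Ty.mu a' ∧ R (Ty.unfoldTy a') b) ∨
  (∃ b', b = Ty.mu b' ∧ R a (Ty.unfoldTy b'))

/-- Coinductive type equality ≈, as the greatest fixpoint of `TyEqF`. -/
def TyEq (a b : Ty) : Prop :=
  ∃ R : Ty → Ty → Prop, (∀ x y, R x y → TyEqF R x y) ∧ R a b

/-- Terms (common syntax: fix, fold and unfold included). -/
inductive Tm : Type
  | unit : Tm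
  | tru : Tm
  | fls : Tm
  | var : ℕ → Tm
  | lam : Ty → Tm → Tm
  | app : Tm → Tm → Tm
  | pair : Tm → Tm → Tm
  | fst : Tm → Tm
  | snd : Tm → Tm
  | inl : Tm → Tm
  | inr : Tm → Tm
  | caseof : Tm → Tm → Tm → Tm
  | ifte : Tm → Tm → Tm → Tm
  | seq : Tm → Tm → Tm
  | fix : Ty → Tm → Tm
  | fold : Ty → Tm → Tm
  | unfold : Ty → Tm → Tm

inductive Value : Tm → Prop
  | unit : Value Tm.unit
  | tru : Value Tm.tru
  | fls : Value Tm.fls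
  | lam : Value (Tm.lam τ t)
  | pair : Value v1 → Value v2 → Value (Tm.pair v1 v2)
  | inl : Value v → Value (Tm.inl v)
  | inr : Value v → Value (Tm.inr v)
  | fold : Value v → Value (Tm.fold τ v)

/-- Size of a term: number of AST nodes, ignoring bodies of lambdas. -/
def size : Tm → ℕ
  | Tm.unit => 1
  | Tm.tru => 1
  | Tm.fls => 1
  | Tm.var _ => 1
  | Tm.lam _ _ => 1
  | Tm.app a b => size a + size b + 1
  | Tm.pair a b => size a + size b + 1
  | Tm.fst a => size a + 1
  | Tm.snd a => size a + 1
  | Tm.inl a => size a + 1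
  | Tm.inr a => size a + 1
  | Tm.caseof a b c => size a + size b + size c + 1
  | Tm.ifte a b c => size a + size b + size c + 1
  | Tm.seq a b => size a + size b + 1
  | Tm.fix _ a => size a + 1
  | Tm.fold _ a => size a + 1
  | Tm.unfold _ a => size a + 1

namespace Tm

def shift : ℕ → Tm → Tm
  | _, unit => unit
  | _, tru => tru
  | _, fls => fls
  | c, var n => if n < c then var n else var (n+1)
  | c, lam τ t => lam τ (shift (c+1) t)
  | c, app a b => app (shift c a) (shift c b)
  | c, pair a b => pair (shift c a) (shift c b)
  | c, fst a => fst (shift c a)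
  | c, snd a => snd (shift c a)
  | c, inl a => inl (shift c a)
  | c, inr a => inr (shift c a)
  | c, caseof a b d => caseof (shift c a) (shift (c+1) b) (shift (c+1) d)
  | c, ifte a b d => ifte (shift c a) (shift c b) (shift c d)
  | c, seq a b => seq (shift c a) (shift c b)
  | c, fix τ a => fix τ (shift c a)
  | c, fold τ a => fold τ (shift c a)
  | c, unfold τ a => unfold τ (shift c a)

def subst : ℕ → Tm → Tm → Tm
  | _, _, unit => unit
  | _, _, tru => tru
  | _, _, fls => fls
  | k, s, var n => if n = k then s else if k < n then var (n-1) else var n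
  | k, s, lam τ t => lam τ (subst (k+1) (shift 0 s) t)
  | k, s, app a b => app (subst k s a) (subst k s b)
  | k, s, pair a b => pair (subst k s a) (subst k s b)
  | k, s, fst a => fst (subst k s a)
  | k, s, snd a => snd (subst k s a)
  | k, s, inl a => inl (subst k s a)
  | k, s, inr a => inr (subst k s a)
  | k, s, caseof a b d => caseof (subst k s a) (subst (k+1) (shift 0 s) b) (subst (k+1) (shift 0 s) d)
  | k, s, ifte a b d => ifte (subst k s a) (subst k s b) (subst k s d)
  | k, s, seq a b => seq (subst k s a) (subst k s b)
  | k, s, fix τ a => fix τ (subst k s a)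
  | k, s, fold τ a => fold τ (subst k s a)
  | k, s, unfold τ a => unfold τ (subst k s a)

def FVBelow : ℕ → Tm → Prop
  | _, unit => True
  | _, tru => True
  | _, fls => True
  | k, var n => n < k
  | k, lam _ t => FVBelow (k+1) t
  | k, app a b => FVBelow k a ∧ FVBelow k b
  | k, pair a b => FVBelow k a ∧ FVBelow k b
  | k, fst a => FVBelow k a
  | k, snd a => FVBelow k a
  | k, inl a => FVBelow k a
  | k, inr a => FVBelow k a
  | k, caseof a b d => FVBelow k a ∧ FVBelow (k+1) b ∧ FVBelow (k+1) d
  | k, ifte a b d => FVBelow k a ∧ FVBelow k b ∧ FVBelow k d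
  | k, seq a b => FVBelow k a ∧ FVBelow k b
  | k, fix _ a => FVBelow k a
  | k, fold _ a => FVBelow k a
  | k, unfold _ a => FVBelow k a

end Tm

/-- `subst0 t v`: substitute `v` for de Bruijn variable 0 in `t`. -/
def subst0 (t v : Tm) : Tm := Tm.subst 0 v t

/-- Primitive reductions. -/
inductive Prim : Tm → Tm → Prop
  | beta : Value v → Prim (Tm.app (Tm.lam τ t) v) (subst0 t v)
  | fstR : Value v1 → Value v2 → Prim (Tm.fst (Tm.pair v1 v2)) v1
  | sndR : Value v1 → Value v2 → Prim (Tm.snd (Tm.pair v1 v2)) v2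
  | seqR : Prim (Tm.seq Tm.unit t) t
  | caseL : Value v → Prim (Tm.caseof (Tm.inl v) t1 t2) (subst0 t1 v)
  | caseR : Value v → Prim (Tm.caseof (Tm.inr v) t1 t2) (subst0 t2 v)
  | iteT : Prim (Tm.ifte Tm.tru t1 t2) t1
  | iteF : Prim (Tm.ifte Tm.fls t1 t2) t2
  | fixBeta : Prim (Tm.fix τ (Tm.lam σ t)) (subst0 t (Tm.fix τ (Tm.lam σ t)))
  | unfoldFold : Value v → Prim (Tm.unfold τ (Tm.fold τ v)) v

/-- Small-step call-by-value reduction (contextual closure of `Prim`). -/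
inductive Step : Tm → Tm → Prop
  | prim : Prim t t' → Step t t'
  | app1 : Step t1 t1' → Step (Tm.app t1 t2) (Tm.app t1' t2)
  | app2 : Value v → Step t2 t2' → Step (Tm.app v t2) (Tm.app v t2')
  | pair1 : Step t1 t1' → Step (Tm.pair t1 t2) (Tm.pair t1' t2)
  | pair2 : Value v → Step t2 t2' → Step (Tm.pair v t2) (Tm.pair v t2')
  | fstC : Step t t' → Step (Tm.fst t) (Tm.fst t')
  | sndC : Step t t' → Step (Tm.snd t) (Tm.snd t')
  | inlC : Step t t' → Step (Tm.inl t) (Tm.inl t')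
  | inrC : Step t t' → Step (Tm.inr t) (Tm.inr t')
  | caseC : Step t t' → Step (Tm.caseof t t1 t2) (Tm.caseof t' t1 t2)
  | iteC : Step t t' → Step (Tm.ifte t t1 t2) (Tm.ifte t' t1 t2)
  | seqC : Step t t' → Step (Tm.seq t t2) (Tm.seq t' t2)
  | fixC : Step t t' → Step (Tm.fix τ t) (Tm.fix τ t')
  | foldC : Step t t' → Step (Tm.fold τ t) (Tm.fold τ t')
  | unfoldC : Step t t' → Step (Tm.unfold τ t) (Tm.unfold τ t')

inductive StepN : ℕ → Tm → Tm → Prop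
  | refl : StepN 0 t t
  | step : Step t t' → StepN n t' u → StepN (n+1) t u

/-- Standard termination: `t` reduces to a value in some number of steps. -/
def Terminates (t : Tm) : Prop := ∃ n v, StepN n t v ∧ Value v

/-- Size-bounded termination (ShrinkTerm):  t ⇓ₛ(n) v. -/
inductive ShrinkTm : Tm → ℕ → Tm → Prop
  | val : Value v → size v ≤ n → ShrinkTm v n v
  | step : Step t t' → ShrinkTm t' n v → size t ≤ n → ShrinkTm t (n+1) v

/-- Typing for the iso-recursive STLC. -/
inductive HasTypeI : List Ty → Tm → Ty → Prop
  | unit : HasTypeI Γ Tm.unit Ty.unit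
  | tru : HasTypeI Γ Tm.tru Ty.bool
  | fls : HasTypeI Γ Tm.fls Ty.bool
  | var : Γ[n]? = some τ → HasTypeI Γ (Tm.var n) τ
  | lam : Ty.Closed τ → HasTypeI (τ :: Γ) t σ → HasTypeI Γ (Tm.lam τ t) (Ty.arrow τ σ)
  | app : HasTypeI Γ t1 (Ty.arrow τ σ) → HasTypeI Γ t2 τ → HasTypeI Γ (Tm.app t1 t2) σ
  | pair : HasTypeI Γ t1 τ → HasTypeI Γ t2 σ → HasTypeI Γ (Tm.pair t1 t2) (Ty.prod τ σ)
  | fst : HasTypeI Γ t (Ty.prod τ σ) → HasTypeI Γ (Tm.fst t) τ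
  | snd : HasTypeI Γ t (Ty.prod τ σ) → HasTypeI Γ (Tm.snd t) σ
  | inl : HasTypeI Γ t τ → HasTypeI Γ (Tm.inl t) (Ty.sum τ σ)
  | inr : HasTypeI Γ t σ → HasTypeI Γ (Tm.inr t) (Ty.sum τ σ)
  | caseof : HasTypeI Γ t (Ty.sum τ1 τ2) → HasTypeI (τ1 :: Γ) t1 τ → HasTypeI (τ2 :: Γ) t2 τ →
      HasTypeI Γ (Tm.caseof t t1 t2) τ
  | ifte : HasTypeI Γ t Ty.bool → HasTypeI Γ t1 τ → HasTypeI Γ t2 τ →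
      HasTypeI Γ (Tm.ifte t t1 t2) τ
  | seq : HasTypeI Γ t1 Ty.unit → HasTypeI Γ t2 τ → HasTypeI Γ (Tm.seq t1 t2) τ
  | fold : HasTypeI Γ t (Ty.unfoldTy τ) → HasTypeI Γ (Tm.fold (Ty.mu τ) t) (Ty.mu τ)
  | unfold : HasTypeI Γ t (Ty.mu τ) → HasTypeI Γ (Tm.unfold (Ty.mu τ) t) (Ty.unfoldTy τ)

/-- Typing for the STLC with fix. -/
inductive HasTypeF : List Ty → Tm → Ty → Prop
  | unit : HasTypeF Γ Tm.unit Ty.unit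
  | tru : HasTypeF Γ Tm.tru Ty.bool
  | fls : HasTypeF Γ Tm.fls Ty.bool
  | var : Γ[n]? = some τ → HasTypeF Γ (Tm.var n) τ
  | lam : Ty.Closed τ → HasTypeF (τ :: Γ) t σ → HasTypeF Γ (Tm.lam τ t) (Ty.arrow τ σ)
  | app : HasTypeF Γ t1 (Ty.arrow τ σ) → HasTypeF Γ t2 τ → HasTypeF Γ (Tm.app t1 t2) σ
  | pair : HasTypeF Γ t1 τ → HasTypeF Γ t2 σ → HasTypeF Γ (Tm.pair t1 t2) (Ty.prod τ σ)
  | fst : HasTypeF Γ t (Ty.prod τ σ) → HasTypeF Γ (Tm.fst t) τ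
  | snd : HasTypeF Γ t (Ty.prod τ σ) → HasTypeF Γ (Tm.snd t) σ
  | inl : HasTypeF Γ t τ → HasTypeF Γ (Tm.inl t) (Ty.sum τ σ)
  | inr : HasTypeF Γ t σ → HasTypeF Γ (Tm.inr t) (Ty.sum τ σ)
  | caseof : HasTypeF Γ t (Ty.sum τ1 τ2) → HasTypeF (τ1 :: Γ) t1 τ → HasTypeF (τ2 :: Γ) t2 τ →
      HasTypeF Γ (Tm.caseof t t1 t2) τ
  | ifte : HasTypeF Γ t Ty.bool → HasTypeF Γ t1 τ → HasTypeF Γ t2 τ →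
      HasTypeF Γ (Tm.ifte t t1 t2) τ
  | seq : HasTypeF Γ t1 Ty.unit → HasTypeF Γ t2 τ → HasTypeF Γ (Tm.seq t1 t2) τ
  | fix : HasTypeF Γ t (Ty.arrow (Ty.arrow τ1 τ2) (Ty.arrow τ1 τ2)) →
      HasTypeF Γ (Tm.fix (Ty.arrow τ1 τ2) t) (Ty.arrow τ1 τ2)

/-- Typing for the (coinductive) equi-recursive STLC, with the conversion rule. -/
inductive HasTypeE : List Ty → Tm → Ty → Prop
  | unit : HasTypeE Γ Tm.unit Ty.unit
  | tru : HasTypeE Γ Tm.tru Ty.bool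
  | fls : HasTypeE Γ Tm.fls Ty.bool
  | var : Γ[n]? = some τ → HasTypeE Γ (Tm.var n) τ
  | lam : Ty.Closed τ → HasTypeE (τ :: Γ) t σ → HasTypeE Γ (Tm.lam τ t) (Ty.arrow τ σ)
  | app : HasTypeE Γ t1 (Ty.arrow τ σ) → HasTypeE Γ t2 τ → HasTypeE Γ (Tm.app t1 t2) σ
  | pair : HasTypeE Γ t1 τ → HasTypeE Γ t2 σ → HasTypeE Γ (Tm.pair t1 t2) (Ty.prod τ σ)
  | fst : HasTypeE Γ t (Ty.prod τ σ) → HasTypeE Γ (Tm.fst t) τ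
  | snd : HasTypeE Γ t (Ty.prod τ σ) → HasTypeE Γ (Tm.snd t) σ
  | inl : HasTypeE Γ t τ → HasTypeE Γ (Tm.inl t) (Ty.sum τ σ)
  | inr : HasTypeE Γ t σ → HasTypeE Γ (Tm.inr t) (Ty.sum τ σ)
  | caseof : HasTypeE Γ t (Ty.sum τ1 τ2) → HasTypeE (τ1 :: Γ) t1 τ → HasTypeE (τ2 :: Γ) t2 τ →
      HasTypeE Γ (Tm.caseof t t1 t2) τ
  | ifte : HasTypeE Γ t Ty.bool → HasTypeE Γ t1 τ → HasTypeE Γ t2 τ →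
      HasTypeE Γ (Tm.ifte t t1 t2) τ
  | seq : HasTypeE Γ t1 Ty.unit → HasTypeE Γ t2 τ → HasTypeE Γ (Tm.seq t1 t2) τ
  | conv : HasTypeE Γ t τ → TyEq τ σ → HasTypeE Γ t σ

/-- Erasure of fold/unfold annotations (canonical compiler iso → equi). -/
def eraseTm : Tm → Tm
  | Tm.unit => Tm.unit
  | Tm.tru => Tm.tru
  | Tm.fls => Tm.fls
  | Tm.var n => Tm.var n
  | Tm.lam τ t => Tm.lam τ (eraseTm t)
  | Tm.app a b => Tm.app (eraseTm a) (eraseTm b)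
  | Tm.pair a b => Tm.pair (eraseTm a) (eraseTm b)
  | Tm.fst a => Tm.fst (eraseTm a)
  | Tm.snd a => Tm.snd (eraseTm a)
  | Tm.inl a => Tm.inl (eraseTm a)
  | Tm.inr a => Tm.inr (eraseTm a)
  | Tm.caseof a b c => Tm.caseof (eraseTm a) (eraseTm b) (eraseTm c)
  | Tm.ifte a b c => Tm.ifte (eraseTm a) (eraseTm b) (eraseTm c)
  | Tm.seq a b => Tm.seq (eraseTm a) (eraseTm b)
  | Tm.fix τ a => Tm.fix τ (eraseTm a)
  | Tm.fold _ a => eraseTm a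
  | Tm.unfold _ a => eraseTm a

/-- coinductive type equality is reflexive. -/
theorem tyEq_refl (τ : Ty) (hc : Ty.Contractive τ) (hcl : Ty.Closed τ) :
    TyEq τ τ := by
  refine ⟨fun x y => x = y ∨ ∃ a, x = Ty.unfoldTy a ∧ y = Ty.mu a, ?_, Or.inl rfl⟩
  rintro x y (rfl | ⟨a, rfl, rfl⟩)
  · cases x with
    | unit => exact Or.inl ⟨rfl, rfl⟩
    | bool => exact Or.inr (Or.inl ⟨rfl, rfl⟩)
    | tvar n => exact Or.inr (Or.inr (Or.inl ⟨n, rfl, rfl⟩))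
    | arrow a b =>
      exact Or.inr (Or.inr (Or.inr (Or.inl ⟨a, b, a, b, rfl, rfl, Or.inl rfl, Or.inl rfl⟩)))
    | prod a b =>
      exact Or.inr (Or.inr (Or.inr (Or.inr (Or.inl ⟨a, b, a, b, rfl, rfl, Or.inl rfl, Or.inl rfl⟩))))
    | sum a b =>
      exact Or.inr (Or.inr (Or.inr (Or.inr (Or.inr (Or.inl ⟨a, b, a, b, rfl, rfl, Or.inl rfl, Or.inl rfl⟩)))))
    | mu a =>
      exact Or.inr (Or.inr (Or.inr (Or.inr (Or.inr (Or.inr (Or.inl ⟨a, rfl, Or.inr ⟨a, rfl, rfl⟩⟩))))))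
  · exact Or.inr (Or.inr (Or.inr (Or.inr (Or.inr (Or.inr (Or.inr ⟨a, rfl, Or.inl rfl⟩))))))
end

section
/- The coinductive type equality relation ≈ on contractive recursive types is transitive: if τ ≈ σ and σ ≈ τ' then τ ≈ τ'. -/
set_option autoImplicit true

namespace Ty

lemma guarded_shift_lt (t : Ty) : ∀ c α, α < c → Guarded α t → Guarded α (shift c t) := by
  induction t with
  | unit => intros; trivial
  | bool => intros; trivial
  | arrow a b iha ihb => intros; trivial
  | prod a b iha ihb => intros; trivial
  | sum a b iha ihb => intros; trivial
  | mu a ih =>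
      intro c α h hg
      exact ih (c+1) (α+1) (by omega) hg
  | tvar n =>
      intro c α h hg
      have hg' : n ≠ α := hg
      show Guarded α (if n < c then tvar n else tvar (n+1))
      split
      · exact hg'
      · show n + 1 ≠ α; omega

lemma guarded_shift_ge (t : Ty) : ∀ c α, c ≤ α → Guarded α t → Guarded (α+1) (shift c t) := by
  induction t with
  | unit => intros; trivial
  | bool => intros; trivial
  | arrow a b iha ihb => intros; trivial
  | prod a b iha ihb => intros; trivial
  | sum a b iha ihb => intros; trivial
  | mu a ih =>
      intro c α h hg
      exact ih (c+1) (α+1) (by omega) hg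
  | tvar n =>
      intro c α h hg
      have hg' : n ≠ α := hg
      show Guarded (α+1) (if n < c then tvar n else tvar (n+1))
      split
      · next h' => show n ≠ α + 1; omega
      · show n + 1 ≠ α + 1; omega

lemma guarded_shift_self (t : Ty) : ∀ c, Guarded c (shift c t) := by
  induction t with
  | unit => intros; trivial
  | bool => intros; trivial
  | arrow a b iha ihb => intros; trivial
  | prod a b iha ihb => intros; trivial
  | sum a b iha ihb => intros; trivial
  | mu a ih => intro c; exact ih (c+1)
  | tvar n =>
      intro c
      show Guarded c (if n < c then tvar n else tvar (n+1))
      split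
      · next h' => show n ≠ c; omega
      · next h' => show n + 1 ≠ c; omega

lemma contractive_shift (t : Ty) : ∀ c, Contractive t → Contractive (shift c t) := by
  induction t with
  | unit => intros; trivial
  | bool => intros; trivial
  | arrow a b iha ihb => intro c hc; exact ⟨iha c hc.1, ihb c hc.2⟩
  | prod a b iha ihb => intro c hc; exact ⟨iha c hc.1, ihb c hc.2⟩
  | sum a b iha ihb => intro c hc; exact ⟨iha c hc.1, ihb c hc.2⟩
  | mu a ih =>
      intro c hc
      exact ⟨guarded_shift_lt a (c+1) 0 (by omega) hc.1, ih (c+1) hc.2⟩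
  | tvar n =>
      intro c _
      show Contractive (if n < c then tvar n else tvar (n+1))
      split <;> trivial

lemma guarded_subst (t : Ty) :
    ∀ k s α, α < k → Guarded α t → Guarded α s → Guarded α (subst k s t) := by
  induction t with
  | unit => intros; trivial
  | bool => intros; trivial
  | arrow a b iha ihb => intros; trivial
  | prod a b iha ihb => intros; trivial
  | sum a b iha ihb => intros; trivial
  | mu a ih =>
      intro k s α h hg hs
      exact ih (k+1) (shift 0 s) (α+1) (by omega) hg (guarded_shift_ge s 0 α (Nat.zero_le _) hs)
  | tvar n =>
      intro k s α h hg hs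
      have hg' : n ≠ α := hg
      show Guarded α (if n = k then s else if k < n then tvar (n-1) else tvar n)
      split
      · exact hs
      · split
        · next h1 h2 => show n - 1 ≠ α; omega
        · exact hg'

lemma contractive_subst (t : Ty) :
    ∀ k s, Contractive t → Contractive s → Contractive (subst k s t) := by
  induction t with
  | unit => intros; trivial
  | bool => intros; trivial
  | arrow a b iha ihb => intro k s hc hs; exact ⟨iha k s hc.1 hs, ihb k s hc.2 hs⟩
  | prod a b iha ihb => intro k s hc hs; exact ⟨iha k s hc.1 hs, ihb k s hc.2 hs⟩
  | sum a b iha ihb => intro k s hc hs; exact ⟨iha k s hc.1 hs, ihb k s hc.2 hs⟩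
  | mu a ih =>
      intro k s hc hs
      exact ⟨guarded_subst a (k+1) (shift 0 s) 0 (by omega) hc.1 (guarded_shift_self s 0),
        ih (k+1) (shift 0 s) hc.2 (contractive_shift s 0 hs)⟩
  | tvar n =>
      intro k s _ hs
      show Contractive (if n = k then s else if k < n then tvar (n-1) else tvar n)
      split
      · exact hs
      · split <;> trivial

lemma lMuCount_subst (t : Ty) :
    ∀ k s, Guarded k t → lMuCount (subst k s t) = lMuCount t := by
  induction t with
  | unit => intros; rfl
  | bool => intros; rfl
  | arrow a b iha ihb => intros; rfl
  | prod a b iha ihb => intros; rfl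
  | sum a b iha ihb => intros; rfl
  | mu a ih =>
      intro k s hg
      have h := ih (k+1) (shift 0 s) hg
      show lMuCount (subst (k+1) (shift 0 s) a) + 1 = lMuCount a + 1
      omega
  | tvar n =>
      intro k s hg
      have hg' : n ≠ k := hg
      show lMuCount (if n = k then s else if k < n then tvar (n-1) else tvar n) = 0
      rw [if_neg hg']
      split <;> rfl

lemma contractive_unfold {a : Ty} (h : Contractive (mu a)) : Contractive (unfoldTy a) :=
  contractive_subst _ _ _ h.2 h

lemma lMuCount_unfold {a : Ty} (h : Guarded 0 a) : lMuCount (unfoldTy a) = lMuCount a :=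
  lMuCount_subst _ _ _ h

end Ty

lemma tyEqF_mono {R R' : Ty → Ty → Prop} (h : ∀ x y, R x y → R' x y) {a b : Ty}
    (hF : TyEqF R a b) : TyEqF R' a b := by
  unfold TyEqF at *
  rcases hF with h1 | h1 | h1 | ⟨a1,a2,b1,b2,e1,e2,r1,r2⟩ | ⟨a1,a2,b1,b2,e1,e2,r1,r2⟩ |
    ⟨a1,a2,b1,b2,e1,e2,r1,r2⟩ | ⟨a',e,r⟩ | ⟨b',e,r⟩
  · exact Or.inl h1
  · exact Or.inr (Or.inl h1)
  · exact Or.inr (Or.inr (Or.inl h1))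
  · exact Or.inr (Or.inr (Or.inr (Or.inl ⟨a1,a2,b1,b2,e1,e2,h _ _ r1,h _ _ r2⟩)))
  · exact Or.inr (Or.inr (Or.inr (Or.inr (Or.inl ⟨a1,a2,b1,b2,e1,e2,h _ _ r1,h _ _ r2⟩))))
  · exact Or.inr (Or.inr (Or.inr (Or.inr (Or.inr (Or.inl ⟨a1,a2,b1,b2,e1,e2,h _ _ r1,h _ _ r2⟩)))))
  · exact Or.inr (Or.inr (Or.inr (Or.inr (Or.inr (Or.inr (Or.inl ⟨a',e,h _ _ r⟩))))))
  · exact Or.inr (Or.inr (Or.inr (Or.inr (Or.inr (Or.inr (Or.inr ⟨b',e,h _ _ r⟩))))))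

lemma tyEq_dest {a b : Ty} (h : TyEq a b) : TyEqF TyEq a b := by
  obtain ⟨R, hR, hab⟩ := h
  exact tyEqF_mono (fun x y hxy => ⟨R, hR, hxy⟩) (hR _ _ hab)

/-- Composition-through-a-contractive-middle relation. -/
def RComp (a c : Ty) : Prop := ∃ b, Ty.Contractive b ∧ TyEq a b ∧ TyEq b c

lemma rcomp_post : ∀ a c, RComp a c → TyEqF RComp a c := by
  suffices key : ∀ n b a c, Ty.lMuCount b = n → Ty.Contractive b → TyEq a b → TyEq b c →
      TyEqF RComp a c by
    rintro a c ⟨b, hb, h1, h2⟩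
    exact key _ b a c rfl hb h1 h2
  intro n
  induction n using Nat.strong_induction_on with
  | _ n ih =>
  intro b a c hn hb h1 h2
  have S1 := tyEq_dest h1
  rcases S1 with ⟨ea, eb⟩ | ⟨ea, eb⟩ | ⟨m, ea, eb⟩ | ⟨a1,a2,b1,b2,ea,eb,r1,r2⟩ |
    ⟨a1,a2,b1,b2,ea,eb,r1,r2⟩ | ⟨a1,a2,b1,b2,ea,eb,r1,r2⟩ | ⟨a',ea,r⟩ | ⟨b',eb,r⟩
  all_goals first
    | -- case a = mu a'
      (subst ea
       exact Or.inr (Or.inr (Or.inr (Or.inr (Or.inr (Or.inr (Or.inl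
         ⟨_, rfl, ⟨b, hb, r, h2⟩⟩)))))))
    | -- case b = mu b'
      (subst eb
       have S2 := tyEq_dest h2
       rcases S2 with ⟨eb, ec⟩ | ⟨eb, ec⟩ | ⟨m2, eb, ec⟩ | ⟨b3,b4,c1,c2,eb,ec,s1,s2⟩ |
         ⟨b3,b4,c1,c2,eb,ec,s1,s2⟩ | ⟨b3,b4,c1,c2,eb,ec,s1,s2⟩ | ⟨bb,eb,s⟩ | ⟨c',ec,s⟩
       all_goals try exact Ty.noConfusion eb
       · -- left-mu on b
         injection eb with e
         subst e
         have hcu : Ty.Contractive (Ty.unfoldTy b') := Ty.contractive_unfold hb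
         have hlt : Ty.lMuCount (Ty.unfoldTy b') < n := by
           have h3 := Ty.lMuCount_unfold (a := b') hb.1
           simp [Ty.lMuCount] at hn
           omega
         exact ih _ hlt _ _ _ rfl hcu r s
       · -- right-mu on c
         subst ec
         exact Or.inr (Or.inr (Or.inr (Or.inr (Or.inr (Or.inr (Or.inr
           ⟨_, rfl, ⟨_, hb, h1, s⟩⟩)))))))
    | -- flat cases: b is unit/bool/tvar/arrow/prod/sum
      (subst_vars
       have S2 := tyEq_dest h2
       rcases S2 with ⟨eb, ec⟩ | ⟨eb, ec⟩ | ⟨m2, eb, ec⟩ | ⟨b3,b4,c1,c2,eb,ec,s1,s2⟩ |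
         ⟨b3,b4,c1,c2,eb,ec,s1,s2⟩ | ⟨b3,b4,c1,c2,eb,ec,s1,s2⟩ | ⟨bb,eb,s⟩ | ⟨c',ec,s⟩
       all_goals first
         | exact Ty.noConfusion eb
         | (first
             | injection eb with e1 e2
             | injection eb with e1
             | skip
            subst_vars
            first
             | exact Or.inl ⟨rfl, rfl⟩
             | exact Or.inr (Or.inl ⟨rfl, rfl⟩)
             | exact Or.inr (Or.inr (Or.inl ⟨_, rfl, rfl⟩))
             | exact Or.inr (Or.inr (Or.inr (Or.inl
                 ⟨_,_,_,_, rfl, rfl, ⟨_, hb.1, r1, s1⟩, ⟨_, hb.2, r2, s2⟩⟩)))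
             | exact Or.inr (Or.inr (Or.inr (Or.inr (Or.inl
                 ⟨_,_,_,_, rfl, rfl, ⟨_, hb.1, r1, s1⟩, ⟨_, hb.2, r2, s2⟩⟩))))
             | exact Or.inr (Or.inr (Or.inr (Or.inr (Or.inr (Or.inl
                 ⟨_,_,_,_, rfl, rfl, ⟨_, hb.1, r1, s1⟩, ⟨_, hb.2, r2, s2⟩⟩)))))
             | exact Or.inr (Or.inr (Or.inr (Or.inr (Or.inr (Or.inr (Or.inr ⟨_, rfl, ⟨_, hb, h1, s⟩⟩))))))))

/-- coinductive type equality is transitive. -/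
theorem tyEq_trans (τ σ τ' : Ty) (hcτ : Ty.Contractive τ) (hcσ : Ty.Contractive σ)
    (hcτ' : Ty.Contractive τ') (h1 : TyEq τ σ) (h2 : TyEq σ τ') : TyEq τ τ' := by
  exact ⟨RComp, rcomp_post, σ, hcσ, h1, h2⟩
end

section
/- The canonical embedding compiler from the iso-recursive STLC to the coinductive equi-recursive STLC, which erases all fold and unfold annotations and is the identity on types, is type-preserving: if Γ ⊢ t : τ in the iso-recursive calculus, then Γ ⊢ erase(t) : τ in the equi-recursive calculus. -/
set_option autoImplicit true

private def eraseR (x y : Ty) : Prop :=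
  x = y ∨ (∃ a, x = Ty.mu a ∧ y = Ty.unfoldTy a) ∨ (∃ a, y = Ty.mu a ∧ x = Ty.unfoldTy a)

private lemma eraseR_post : ∀ x y, eraseR x y → TyEqF eraseR x y := by
  intro x y h
  rcases h with rfl | ⟨a, rfl, rfl⟩ | ⟨a, rfl, rfl⟩
  · cases x with
    | unit => exact Or.inl ⟨rfl, rfl⟩
    | bool => exact Or.inr (Or.inl ⟨rfl, rfl⟩)
    | tvar n => exact Or.inr (Or.inr (Or.inl ⟨n, rfl, rfl⟩))
    | arrow a b => exact Or.inr (Or.inr (Or.inr (Or.inl ⟨a, b, a, b, rfl, rfl, Or.inl rfl, Or.inl rfl⟩)))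
    | prod a b => exact Or.inr (Or.inr (Or.inr (Or.inr (Or.inl ⟨a, b, a, b, rfl, rfl, Or.inl rfl, Or.inl rfl⟩))))
    | sum a b => exact Or.inr (Or.inr (Or.inr (Or.inr (Or.inr (Or.inl ⟨a, b, a, b, rfl, rfl, Or.inl rfl, Or.inl rfl⟩)))))
    | mu a =>
      exact Or.inr (Or.inr (Or.inr (Or.inr (Or.inr (Or.inr (Or.inl
        ⟨a, rfl, Or.inr (Or.inr ⟨a, rfl, rfl⟩)⟩))))))
  · exact Or.inr (Or.inr (Or.inr (Or.inr (Or.inr (Or.inr (Or.inl ⟨a, rfl, Or.inl rfl⟩))))))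
  · exact Or.inr (Or.inr (Or.inr (Or.inr (Or.inr (Or.inr (Or.inr ⟨a, rfl, Or.inl rfl⟩))))))

private lemma tyEq_mu_unfold (a : Ty) : TyEq (Ty.mu a) (Ty.unfoldTy a) :=
  ⟨eraseR, eraseR_post, Or.inr (Or.inl ⟨a, rfl, rfl⟩)⟩

private lemma tyEq_unfold_mu (a : Ty) : TyEq (Ty.unfoldTy a) (Ty.mu a) :=
  ⟨eraseR, eraseR_post, Or.inr (Or.inr ⟨a, rfl, rfl⟩)⟩

/-- the fold/unfold-erasure compiler is type-preserving. -/
theorem erase_type_preserving (Γ : List Ty) (t : Tm) (τ : Ty)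
    (h : HasTypeI Γ t τ) : HasTypeE Γ (eraseTm t) τ := by
  induction h with
  | unit => exact HasTypeE.unit
  | tru => exact HasTypeE.tru
  | fls => exact HasTypeE.fls
  | var h => exact HasTypeE.var h
  | lam hc _ ih => exact HasTypeE.lam hc ih
  | app _ _ ih1 ih2 => exact HasTypeE.app ih1 ih2
  | pair _ _ ih1 ih2 => exact HasTypeE.pair ih1 ih2
  | fst _ ih => exact HasTypeE.fst ih
  | snd _ ih => exact HasTypeE.snd ih
  | inl _ ih => exact HasTypeE.inl ih
  | inr _ ih => exact HasTypeE.inr ih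
  | caseof _ _ _ ih ih1 ih2 => exact HasTypeE.caseof ih ih1 ih2
  | ifte _ _ _ ih ih1 ih2 => exact HasTypeE.ifte ih ih1 ih2
  | seq _ _ ih1 ih2 => exact HasTypeE.seq ih1 ih2
  | fold _ ih => exact HasTypeE.conv ih (tyEq_unfold_mu _)
  | unfold _ ih => exact HasTypeE.conv ih (tyEq_mu_unfold _)
end

section
/- Erasure of fold/unfold annotations preserves and reflects reduction behavior up to administrative steps: if t → t' in the iso-recursive calculus via the unfold-fold cancellation rule then erase(t) = erase(t'), and if t → t' via any other primitive rule then erase(t) → erase(t') in the equi-recursive calculus. Consequently, if t terminates in the iso-recursive calculus then erase(t) terminates in the equi-recursive calculus. -/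
set_option autoImplicit true

lemma erase_shift (c : ℕ) (t : Tm) : eraseTm (Tm.shift c t) = Tm.shift c (eraseTm t) := by
  induction t generalizing c <;> simp [Tm.shift, eraseTm, *] <;> split <;> simp [eraseTm]

lemma erase_subst (k : ℕ) (s t : Tm) :
    eraseTm (Tm.subst k s t) = Tm.subst k (eraseTm s) (eraseTm t) := by
  induction t generalizing k s <;> simp [Tm.subst, eraseTm, erase_shift, *] <;>
    split_ifs <;> simp [eraseTm]

lemma erase_value {v : Tm} (h : Value v) : Value (eraseTm v) := by
  induction h <;> simp [eraseTm] <;> first | assumption | (constructor <;> assumption)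

lemma erase_prim {t t' : Tm} (h : Prim t t') :
    eraseTm t = eraseTm t' ∨ Step (eraseTm t) (eraseTm t') := by
  cases h with
  | unfoldFold hv => exact Or.inl rfl
  | beta hv => exact Or.inr (Step.prim (by
      rw [eraseTm, eraseTm, subst0, erase_subst]; exact Prim.beta (erase_value hv)))
  | fstR h1 h2 => exact Or.inr (Step.prim (by
      simpa [eraseTm] using Prim.fstR (erase_value h1) (erase_value h2)))
  | sndR h1 h2 => exact Or.inr (Step.prim (by
      simpa [eraseTm] using Prim.sndR (erase_value h1) (erase_value h2)))
  | seqR => exact Or.inr (Step.prim (by simpa [eraseTm] using Prim.seqR))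
  | caseL hv => exact Or.inr (Step.prim (by
      rw [eraseTm, eraseTm, subst0, erase_subst]; exact Prim.caseL (erase_value hv)))
  | caseR hv => exact Or.inr (Step.prim (by
      rw [eraseTm, eraseTm, subst0, erase_subst]; exact Prim.caseR (erase_value hv)))
  | iteT => exact Or.inr (Step.prim Prim.iteT)
  | iteF => exact Or.inr (Step.prim Prim.iteF)
  | fixBeta => exact Or.inr (Step.prim (by
      rw [eraseTm, eraseTm, subst0, erase_subst]
      simpa [eraseTm, subst0] using Prim.fixBeta))

lemma erase_step {t t' : Tm} (h : Step t t') :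
    eraseTm t = eraseTm t' ∨ Step (eraseTm t) (eraseTm t') := by
  induction h with
  | prim h => exact erase_prim h

  | app1 _ ih => 
    rcases ih with h | h
    · exact Or.inl (by simp [eraseTm, h])
    · exact Or.inr (by simpa [eraseTm] using Step.app1 h)
  | app2 hv _ ih => 
    rcases ih with h | h
    · exact Or.inl (by simp [eraseTm, h])
    · exact Or.inr (by simpa [eraseTm] using Step.app2 (erase_value hv) h)
  | pair1 _ ih => 
    rcases ih with h | h
    · exact Or.inl (by simp [eraseTm, h])
    · exact Or.inr (by simpa [eraseTm] using Step.pair1 h)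
  | pair2 hv _ ih => 
    rcases ih with h | h
    · exact Or.inl (by simp [eraseTm, h])
    · exact Or.inr (by simpa [eraseTm] using Step.pair2 (erase_value hv) h)
  | fstC _ ih => 
    rcases ih with h | h
    · exact Or.inl (by simp [eraseTm, h])
    · exact Or.inr (by simpa [eraseTm] using Step.fstC h)
  | sndC _ ih => 
    rcases ih with h | h
    · exact Or.inl (by simp [eraseTm, h])
    · exact Or.inr (by simpa [eraseTm] using Step.sndC h)
  | inlC _ ih => 
    rcases ih with h | h
    · exact Or.inl (by simp [eraseTm, h])
    · exact Or.inr (by simpa [eraseTm] using Step.inlC h)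
  | inrC _ ih => 
    rcases ih with h | h
    · exact Or.inl (by simp [eraseTm, h])
    · exact Or.inr (by simpa [eraseTm] using Step.inrC h)
  | caseC _ ih => 
    rcases ih with h | h
    · exact Or.inl (by simp [eraseTm, h])
    · exact Or.inr (by simpa [eraseTm] using Step.caseC h)
  | iteC _ ih => 
    rcases ih with h | h
    · exact Or.inl (by simp [eraseTm, h])
    · exact Or.inr (by simpa [eraseTm] using Step.iteC h)
  | seqC _ ih => 
    rcases ih with h | h
    · exact Or.inl (by simp [eraseTm, h])
    · exact Or.inr (by simpa [eraseTm] using Step.seqC h)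
  | fixC _ ih => 
    rcases ih with h | h
    · exact Or.inl (by simp [eraseTm, h])
    · exact Or.inr (by simpa [eraseTm] using Step.fixC h)
  | foldC _ ih => simpa [eraseTm] using ih
  | unfoldC _ ih => simpa [eraseTm] using ih

lemma erase_stepN {n : ℕ} {t v : Tm} (h : StepN n t v) :
    ∃ m u, StepN m (eraseTm t) u ∧ u = eraseTm v := by
  induction h with
  | refl => exact ⟨0, _, StepN.refl, rfl⟩
  | step hs _ ih =>
    obtain ⟨m, u, hm, rfl⟩ := ih
    rcases erase_step hs with h | h
    · exact ⟨m, _, h ▸ hm, rfl⟩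
    · exact ⟨m + 1, _, StepN.step h hm, rfl⟩

/-- erasure preserves reduction up to administrative steps:
    unfold-fold cancellations are erased, every step maps to equality or a step
    of the erased terms, and termination is preserved. -/
theorem erase_simulates :
    (∀ (τ : Ty) (v : Tm), Value v →
      eraseTm (Tm.unfold τ (Tm.fold τ v)) = eraseTm v) ∧
    (∀ t t' : Tm, Step t t' →
      eraseTm t = eraseTm t' ∨ Step (eraseTm t) (eraseTm t')) ∧
    (∀ t : Tm, Terminates t → Terminates (eraseTm t)) := by
  refine ⟨fun τ v _ => rfl, fun t t' h => erase_step h, ?_⟩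
  rintro t ⟨n, v, hsn, hv⟩
  obtain ⟨m, u, hm, rfl⟩ := erase_stepN hsn
  exact ⟨m, _, hm, erase_value hv⟩
end

section
/- The Z-combinator simulates fix: in the iso-recursive STLC, applying the compiled fixpoint Z (as defined via fold/unfold over μα.(α→τ₁→τ₂)) to a value f = λg:τ₁→τ₂. t and then to an argument value v reduces in finitely many steps to t[(λy:τ₁. Z f y)/g] applied to v, matching (up to eta-expansion of the recursive occurrence) the source reduction fix (λg. t) → t[fix (λg. t)/g]. -/
set_option autoImplicit true

lemma fvb_mono (t : Tm) : ∀ (k k' : ℕ), k ≤ k' → Tm.FVBelow k t → Tm.FVBelow k' t := by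
  induction t <;> intro k k' h hf <;> simp only [Tm.FVBelow] at hf ⊢ <;>
    first
      | trivial
      | omega
      | (obtain ⟨h1, h2⟩ := hf; and_intros <;> solve_by_elim [Nat.succ_le_succ])
      | (obtain ⟨h1, h2, h3⟩ := hf; and_intros <;> solve_by_elim [Nat.succ_le_succ])
      | solve_by_elim [Nat.succ_le_succ]

lemma shift_closed (t : Tm) : ∀ (c : ℕ), Tm.FVBelow c t → Tm.shift c t = t := by
  induction t <;> intro c hf <;> simp only [Tm.FVBelow] at hf <;>
    simp_all [Tm.shift]

lemma subst_closed (t : Tm) : ∀ (k : ℕ) (s : Tm), Tm.FVBelow k t → Tm.subst k s t = t := by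
  induction t <;> intro k s hf <;> simp only [Tm.FVBelow] at hf <;>
    first
      | (simp only [Tm.subst]; split_ifs <;> first | rfl | omega)
      | simp_all [Tm.subst]
/-- the Z-combinator simulates fix.  Applying Z to f = λg.t and a
    value v reduces in finitely many steps to t[w/g] applied to v, where w is
    the eta-expanded recursive occurrence; moreover w and λy. Z f y behave the
    same: applied to any value they reduce to a common term. -/
theorem z_simulates_fix (τ1 τ2 : Ty) (t v : Tm)
    (hclosed : Tm.FVBelow 1 t) (hv : Value v) :
    let μT : Ty := Ty.mu (Ty.arrow (Ty.tvar 0) (Ty.arrow τ1 τ2))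
    let A : Tm := Tm.lam μT (Tm.app (Tm.var 1) (Tm.lam τ1
      (Tm.app (Tm.app (Tm.unfold μT (Tm.var 1)) (Tm.var 1)) (Tm.var 0))))
    let Z : Tm := Tm.lam (Ty.arrow (Ty.arrow τ1 τ2) (Ty.arrow τ1 τ2))
      (Tm.app A (Tm.fold μT A))
    let f : Tm := Tm.lam (Ty.arrow τ1 τ2) t
    let Af : Tm := Tm.lam μT (Tm.app f (Tm.lam τ1
      (Tm.app (Tm.app (Tm.unfold μT (Tm.var 1)) (Tm.var 1)) (Tm.var 0))))
    let w : Tm := Tm.lam τ1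
      (Tm.app (Tm.app (Tm.unfold μT (Tm.fold μT Af)) (Tm.fold μT Af)) (Tm.var 0))
    (∃ k : ℕ, StepN k (Tm.app (Tm.app Z f) v) (Tm.app (subst0 t w) v)) ∧
    (∀ u : Tm, Value u → ∃ (j1 j2 : ℕ) (r : Tm),
      StepN j1 (Tm.app w u) r ∧
      StepN j2 (Tm.app (Tm.app Z f) u) r) := by
  intro μT A Z f Af w
  have hst : ∀ (k : ℕ) (s : Tm), 1 ≤ k → Tm.subst k s t = t :=
    fun k s h => subst_closed t k s (fvb_mono t 1 k h hclosed)
  have hsh : ∀ (c : ℕ), 1 ≤ c → Tm.shift c t = t :=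
    fun c h => shift_closed t c (fvb_mono t 1 c h hclosed)
  have e1 : subst0 (Tm.app A (Tm.fold μT A)) f = Tm.app Af (Tm.fold μT Af) := by
    show subst0 (Tm.app
        (Tm.lam μT (Tm.app (Tm.var 1) (Tm.lam τ1
          (Tm.app (Tm.app (Tm.unfold μT (Tm.var 1)) (Tm.var 1)) (Tm.var 0)))))
        (Tm.fold μT (Tm.lam μT (Tm.app (Tm.var 1) (Tm.lam τ1
          (Tm.app (Tm.app (Tm.unfold μT (Tm.var 1)) (Tm.var 1)) (Tm.var 0)))))))
        (Tm.lam (Ty.arrow τ1 τ2) t)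
      = Tm.app Af (Tm.fold μT Af)
    simp [subst0, Tm.subst, Tm.shift, hst, hsh, Af, f]
  have e2 : subst0 (Tm.app f (Tm.lam τ1
      (Tm.app (Tm.app (Tm.unfold μT (Tm.var 1)) (Tm.var 1)) (Tm.var 0))))
      (Tm.fold μT Af) = Tm.app f w := by
    show subst0 (Tm.app (Tm.lam (Ty.arrow τ1 τ2) t) (Tm.lam τ1
        (Tm.app (Tm.app (Tm.unfold μT (Tm.var 1)) (Tm.var 1)) (Tm.var 0))))
        (Tm.fold μT (Tm.lam μT (Tm.app (Tm.lam (Ty.arrow τ1 τ2) t) (Tm.lam τ1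
          (Tm.app (Tm.app (Tm.unfold μT (Tm.var 1)) (Tm.var 1)) (Tm.var 0))))))
      = Tm.app f w
    simp [subst0, Tm.subst, Tm.shift, hst, hsh, w, f, Af]
  have h1 : Step (Tm.app Z f) (Tm.app Af (Tm.fold μT Af)) := by
    rw [← e1]; exact Step.prim (Prim.beta Value.lam)
  have h2 : Step (Tm.app Af (Tm.fold μT Af)) (Tm.app f w) := by
    rw [← e2]; exact Step.prim (Prim.beta (Value.fold Value.lam))
  have h3 : Step (Tm.app f w) (subst0 t w) :=
    Step.prim (Prim.beta Value.lam)
  have main : ∀ x : Tm, StepN 3 (Tm.app (Tm.app Z f) x) (Tm.app (subst0 t w) x) :=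
    fun x => StepN.step (Step.app1 h1)
      (StepN.step (Step.app1 h2) (StepN.step (Step.app1 h3) StepN.refl))
  refine ⟨⟨3, main v⟩, ?_⟩
  intro u hu
  have e3 : subst0 (Tm.app (Tm.app (Tm.unfold μT (Tm.fold μT Af)) (Tm.fold μT Af)) (Tm.var 0)) u
      = Tm.app (Tm.app (Tm.unfold μT (Tm.fold μT Af)) (Tm.fold μT Af)) u := by
    show subst0 (Tm.app (Tm.app (Tm.unfold μT (Tm.fold μT
        (Tm.lam μT (Tm.app (Tm.lam (Ty.arrow τ1 τ2) t) (Tm.lam τ1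
          (Tm.app (Tm.app (Tm.unfold μT (Tm.var 1)) (Tm.var 1)) (Tm.var 0)))))))
        (Tm.fold μT (Tm.lam μT (Tm.app (Tm.lam (Ty.arrow τ1 τ2) t) (Tm.lam τ1
          (Tm.app (Tm.app (Tm.unfold μT (Tm.var 1)) (Tm.var 1)) (Tm.var 0)))))))
        (Tm.var 0)) u
      = Tm.app (Tm.app (Tm.unfold μT (Tm.fold μT Af)) (Tm.fold μT Af)) u
    simp [subst0, Tm.subst, Tm.shift, hst, hsh, Af, f]
  have g1 : Step (Tm.app w u)
      (Tm.app (Tm.app (Tm.unfold μT (Tm.fold μT Af)) (Tm.fold μT Af)) u) := by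
    rw [← e3]; exact Step.prim (Prim.beta hu)
  have g2 : Step (Tm.app (Tm.app (Tm.unfold μT (Tm.fold μT Af)) (Tm.fold μT Af)) u)
      (Tm.app (Tm.app Af (Tm.fold μT Af)) u) :=
    Step.app1 (Step.app1 (Step.prim (Prim.unfoldFold Value.lam)))
  exact ⟨4, 3, Tm.app (subst0 t w) u,
    StepN.step g1 (StepN.step g2 (StepN.step (Step.app1 h2)
      (StepN.step (Step.app1 h3) StepN.refl))),
    main u⟩
end
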